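/- Let E be a normed additive commutative group, u : ℂ → E Borel measurable, and α ∈ ℝ. Then, as an identity of extended nonnegative reals, ∫⁻_{(s,t) ∈ [0,∞) × [0,1)} (‖u (exp(-2π(s + i t)))‖₊)² · e^{α s} d(s,t) = (4π²)⁻¹ · ∫⁻_{z ∈ {z : 0 < ‖z‖ ∧ ‖z‖ ≤ 1}} (‖u z‖₊)² · ‖z‖^{-α/(2π) - 2} dA(z), where dA is Lebesgue measure on ℂ ≅ ℝ². -/

import Mathlib

open MeasureTheory Set Complex ENNReal
open scoped Real

/-!
The map `w ↦ exp (-2π w)` is holomorphic with derivative `-2π exp (-2π w)`, so its real Jacobian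
is `|f'|² = 4π² e^{-4π Re w}`; it maps the half-strip `[0, ∞) ×ℂ [0, 1)` bijectively onto the
punctured unit disk, and there the weight `‖z‖ ^ (-α/(2π) - 2)` pulls back to `e^{(α + 4π) Re w}`.
The Jacobian absorbs the `e^{4π Re w}`, leaving `4π² e^{α Re w}`.
-/

namespace Complex

theorem det_restrictScalars_toSpanSingleton (d : ℂ) :
    ((ContinuousLinearMap.toSpanSingleton ℂ d).restrictScalars ℝ).det = normSq d := by
  rw [ContinuousLinearMap.det, ← LinearMap.det_toMatrix basisOneI, Matrix.det_fin_two]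
  simp [LinearMap.toMatrix_apply, coe_basisOneI_repr, coe_basisOneI, normSq_apply]

theorem lintegral_image_eq_lintegral_normSq_deriv_mul {s : Set ℂ} {f f' : ℂ → ℂ}
    (hs : MeasurableSet s) (hf' : ∀ w ∈ s, HasDerivWithinAt f (f' w) s w) (hf : InjOn f s)
    (g : ℂ → ℝ≥0∞) :
    ∫⁻ z in f '' s, g z = ∫⁻ w in s, ENNReal.ofReal (normSq (f' w)) * g (f w) := by
  have hfR (w) (hw : w ∈ s) := ((hf' w hw).hasFDerivWithinAt).restrictScalars ℝ
  simp only [lintegral_image_eq_lintegral_abs_det_fderiv_mul volume hs hfR hf,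
    det_restrictScalars_toSpanSingleton, abs_of_nonneg (normSq_nonneg _)]

theorem setLIntegral_prod_eq_setLIntegral_reProdIm (s t : Set ℝ) (g : ℝ × ℝ → ℝ≥0∞) :
    ∫⁻ p in s ×ˢ t, g p = ∫⁻ z in s ×ℂ t, g (z.re, z.im) :=
  (volume_preserving_equiv_real_prod.setLIntegral_comp_preimage_emb
    measurableEquivRealProd.measurableEmbedding g (s ×ˢ t)).symm

theorem injOn_exp_neg_two_pi_mul :
    InjOn (fun w ↦ exp (-(2 * π) * w)) (univ ×ℂ Ico 0 1) := by
  intro w₁ hw₁ w₂ hw₂ h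
  obtain ⟨n, hn⟩ := exp_eq_exp_iff_exists_int.mp h
  have hw : w₁ = w₂ - n * I := by
    have hπ : (2 * π : ℂ) ≠ 0 := by exact_mod_cast Real.two_pi_pos.ne'
    apply mul_left_cancel₀ (neg_ne_zero.mpr hπ)
    linear_combination hn
  have him : w₁.im = w₂.im - n := by simp [hw]
  have hn0 : n = 0 := by
    have h₁ := Int.fract_eq_self.mpr (mem_reProdIm.mp hw₁).2
    have h₂ := Int.fract_eq_self.mpr (mem_reProdIm.mp hw₂).2
    rw [him, Int.fract_sub_intCast] at h₁
    exact_mod_cast (show (n : ℝ) = 0 by linarith)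
  simp [hw, hn0]

theorem exp_neg_two_pi_mul_image_reProdIm_univ_Ico :
    (fun w ↦ exp (-(2 * π) * w)) '' (univ ×ℂ Ico 0 1) = {0}ᶜ := by
  refine Subset.antisymm (fun _ ⟨w, _, hw⟩ ↦ hw ▸ exp_ne_zero _) fun z hz ↦ ?_
  obtain ⟨w₀, hw₀⟩ : ∃ w₀ : ℂ, -(2 * π) * w₀ = log z := by
    have hπ : (2 * π : ℂ) ≠ 0 := by exact_mod_cast Real.two_pi_pos.ne'
    exact ⟨-log z / (2 * π), by field_simp⟩
  refine ⟨w₀ - ⌊w₀.im⌋ * I, mem_reProdIm.mpr ⟨mem_univ _, ?_⟩, ?_⟩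
  · have him : (w₀ - ⌊w₀.im⌋ * I).im = Int.fract w₀.im := by simp
    exact him ▸ ⟨Int.fract_nonneg _, Int.fract_lt_one _⟩
  · have : -(2 * π) * (w₀ - ⌊w₀.im⌋ * I) = log z + ⌊w₀.im⌋ * (2 * π * I) := by
      linear_combination hw₀
    simp only [this, exp_add, exp_int_mul_two_pi_mul_I, mul_one, exp_log hz]

theorem norm_exp_neg_two_pi_mul (w : ℂ) : ‖exp (-(2 * π) * w)‖ = Real.exp (-(2 * π) * w.re) := by
  simp [norm_exp]

theorem exp_neg_two_pi_mul_image_reProdIm_Ici_Ico :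
    (fun w ↦ exp (-(2 * π) * w)) '' (Ici 0 ×ℂ Ico 0 1) = {z | 0 < ‖z‖ ∧ ‖z‖ ≤ 1} := by
  have hS : Ici 0 ×ℂ Ico 0 1 =
      univ ×ℂ Ico 0 1 ∩ (fun w ↦ exp (-(2 * π) * w)) ⁻¹' Metric.closedBall 0 1 := by
    ext w
    rw [mem_inter_iff, mem_preimage, Metric.mem_closedBall, dist_zero_right,
      norm_exp_neg_two_pi_mul, Real.exp_le_one_iff, neg_mul, neg_nonpos,
      mul_nonneg_iff_of_pos_left Real.two_pi_pos]
    simp [mem_reProdIm, and_comm]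
  rw [hS, image_inter_preimage, exp_neg_two_pi_mul_image_reProdIm_univ_Ico]
  ext z
  simp [norm_pos_iff]

theorem normSq_deriv_mul_rpow_norm_exp_neg_two_pi_mul (α : ℝ) (w : ℂ) :
    normSq (-(2 * π) * exp (-(2 * π) * w)) * ‖exp (-(2 * π) * w)‖ ^ (-α / (2 * π) - 2) =
      4 * π ^ 2 * Real.exp (α * w.re) := by
  rw [normSq_eq_norm_sq, norm_mul, norm_exp_neg_two_pi_mul, ← Real.exp_mul, mul_pow,
    ← Real.exp_nat_mul, mul_assoc, ← Real.exp_add]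
  have : ‖-(2 * π : ℂ)‖ = 2 * π := by simp [abs_of_pos Real.pi_pos]
  rw [this]
  congr 2
  · ring
  · field_simp
    ring

end Complex

theorem lintegral_sq_cylinder_weighted_eq_disk_general {E : Type*} [NormedAddCommGroup E]
    (u : ℂ → E) (α : ℝ) :
    (∫⁻ p in Set.Ici (0 : ℝ) ×ˢ Set.Ico (0 : ℝ) 1,
        (‖u (Complex.exp (-(2 * Real.pi) * ((p.1 : ℂ) + (p.2 : ℂ) * Complex.I)))‖₊ : ℝ≥0∞) ^ 2 *
          ENNReal.ofReal (Real.exp (α * p.1))) =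
      (ENNReal.ofReal (4 * Real.pi ^ 2))⁻¹ *
        ∫⁻ z in {z : ℂ | 0 < ‖z‖ ∧ ‖z‖ ≤ 1},
          (‖u z‖₊ : ℝ≥0∞) ^ 2 *
            ENNReal.ofReal (‖z‖ ^ (-α / (2 * Real.pi) - 2)) := by
  have hS : MeasurableSet (Ici (0 : ℝ) ×ℂ Ico 0 1) :=
    (measurableSet_Ici.preimage measurable_re).inter (measurableSet_Ico.preimage measurable_im)
  have hderiv (w : ℂ) (_ : w ∈ Ici (0 : ℝ) ×ℂ Ico 0 1) :
      HasDerivWithinAt (fun w ↦ exp (-(2 * π) * w)) (-(2 * π) * exp (-(2 * π) * w))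
        (Ici 0 ×ℂ Ico 0 1) w := by
    simpa [mul_comm] using ((hasDerivAt_id w).const_mul (-(2 * π : ℂ))).cexp.hasDerivWithinAt
  have hinj : InjOn (fun w ↦ exp (-(2 * π) * w)) (Ici 0 ×ℂ Ico 0 1) :=
    injOn_exp_neg_two_pi_mul.mono fun _ hw ↦ mem_reProdIm.mpr ⟨mem_univ _, hw.2⟩
  rw [setLIntegral_prod_eq_setLIntegral_reProdIm, ← exp_neg_two_pi_mul_image_reProdIm_Ici_Ico,
    lintegral_image_eq_lintegral_normSq_deriv_mul hS hderiv hinj]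
  simp only [re_add_im, mul_left_comm (ENNReal.ofReal _), ← ENNReal.ofReal_mul (normSq_nonneg _),
    normSq_deriv_mul_rpow_norm_exp_neg_two_pi_mul]
  have hc : 0 < 4 * π ^ 2 := by positivity
  simp only [ENNReal.ofReal_mul hc.le, mul_left_comm _ (ENNReal.ofReal (4 * π ^ 2))]
  rw [lintegral_const_mul' _ _ ofReal_ne_top,
    ENNReal.inv_mul_cancel_left (ofReal_pos.mpr hc).ne' ofReal_ne_top]

/-- Weighted change of variables to holomorphic polar coordinates
`(s,t) ↦ e^{-2π(s+it)}`: for any real `α`,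
`∫_{[0,∞)×[0,1)} |u∞(s,t)|² e^{αs} dsdt
   = (4π²)⁻¹ ∫_D |u₀(z)|² |z|^{-α/(2π)-2} dxdy`. -/
theorem lintegral_sq_cylinder_weighted_eq_disk {E : Type*} [NormedAddCommGroup E]
    [MeasurableSpace E] [BorelSpace E]
    (u : ℂ → E) (hu : Measurable u) (α : ℝ) :
    (∫⁻ p in Set.Ici (0 : ℝ) ×ˢ Set.Ico (0 : ℝ) 1,
        (‖u (Complex.exp (-(2 * Real.pi) * ((p.1 : ℂ) + (p.2 : ℂ) * Complex.I)))‖₊ : ℝ≥0∞) ^ 2 *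
          ENNReal.ofReal (Real.exp (α * p.1))) =
      (ENNReal.ofReal (4 * Real.pi ^ 2))⁻¹ *
        ∫⁻ z in {z : ℂ | 0 < ‖z‖ ∧ ‖z‖ ≤ 1},
          (‖u z‖₊ : ℝ≥0∞) ^ 2 *
            ENNReal.ofReal (‖z‖ ^ (-α / (2 * Real.pi) - 2)) :=
  lintegral_sq_cylinder_weighted_eq_disk_general u α
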